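/- Let R and S be finite-valued random variables on a probability space such that the pair (R,S) is trivial, let φ and ψ be deterministic functions on the ranges of R and S respectively, and let δ ≥ 0 satisfy I[R ; ψ ∘ S | φ ∘ R] + I[S ; φ ∘ R | ψ ∘ S] ≤ δ. Then there exists a finite-valued random variable Z on the same probability space such that I[φ ∘ R ; ψ ∘ S | Z] = 0 and I[Z ; φ ∘ R | ψ ∘ S] + I[Z ; ψ ∘ S | φ ∘ R] ≤ δ. -/

import Mathlib

/-!
Take for `Z` the witness of the triviality of `(R, S)`. By data processing (a function of a
variable carries no more conditional information than the variable), `I[R;S|Z] = 0` gives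
`I[φ∘R;ψ∘S|Z] = 0`. For the leakage, the chain rule applied to `I[(S,Z);φ∘R|ψ∘S]` in both orders
gives `I[Z;φ∘R|ψ∘S] ≤ I[S;φ∘R|ψ∘S] + I[Z;φ∘R|S]`, and the last term is at most `I[Z;R|S] = 0`;
symmetrically `I[Z;ψ∘S|φ∘R] ≤ I[R;ψ∘S|φ∘R]`. Nonnegativity of conditional mutual information,
used at every step, is Gibbs' inequality.
-/

open MeasureTheory Real
open scoped ENNReal

namespace SecureComputation

variable {Ω : Type*} [MeasurableSpace Ω]

/-- The pair random variable `⟨X,Y⟩`. -/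
def pair {𝒳 𝒴 : Type*} (X : Ω → 𝒳) (Y : Ω → 𝒴) : Ω → 𝒳 × 𝒴 := fun ω => (X ω, Y ω)

/-- Shannon entropy `H[X]` of a finite-valued random variable. -/
noncomputable def ent {𝒳 : Type*} (μ : Measure Ω) (X : Ω → 𝒳) : ℝ :=
  ∑' x : 𝒳, negMulLog ((μ (X ⁻¹' {x})).toReal)

/-- Mutual information `I[X;Y]`. -/
noncomputable def mi {𝒳 𝒴 : Type*} (μ : Measure Ω) (X : Ω → 𝒳) (Y : Ω → 𝒴) : ℝ :=
  ent μ X + ent μ Y - ent μ (pair X Y)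

/-- Conditional mutual information `I[X;Y|Z]`. -/
noncomputable def cmi {𝒳 𝒴 𝒵 : Type*} (μ : Measure Ω) (X : Ω → 𝒳) (Y : Ω → 𝒴)
    (Z : Ω → 𝒵) : ℝ :=
  ent μ (pair X Z) + ent μ (pair Y Z) - ent μ (pair (pair X Y) Z) - ent μ Z

/-- Conditional entropy `H[X|Y]`. -/
noncomputable def condEnt {𝒳 𝒴 : Type*} (μ : Measure Ω) (X : Ω → 𝒳) (Y : Ω → 𝒴) : ℝ :=
  ent μ (pair X Y) - ent μ Y

/-- A finite-valued random variable: preimages of points are measurable. -/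
def DiscreteRV {𝒳 : Type*} (X : Ω → 𝒳) : Prop := ∀ x, MeasurableSet (X ⁻¹' {x})

/-- The pair `(X,Y)` is trivial: some finite-valued `Z` on the same space has
`I[X;Y|Z] = 0`, `I[Z;X|Y] = 0`, `I[Z;Y|X] = 0`. -/
def IsTrivialPair {𝒳 𝒴 : Type*} (μ : Measure Ω) (X : Ω → 𝒳) (Y : Ω → 𝒴) : Prop :=
  ∃ (𝒵 : Type) (_ : Fintype 𝒵) (Z : Ω → 𝒵), DiscreteRV Z ∧
    cmi μ X Y Z = 0 ∧ cmi μ Z X Y = 0 ∧ cmi μ Z Y X = 0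

open Function

lemma DiscreteRV.pair {𝒳 𝒴 : Type*} {X : Ω → 𝒳} {Y : Ω → 𝒴} (hX : DiscreteRV X)
    (hY : DiscreteRV Y) : DiscreteRV (SecureComputation.pair X Y) := by
  rintro ⟨x, y⟩
  rw [show SecureComputation.pair X Y ⁻¹' {(x, y)} = X ⁻¹' {x} ∩ Y ⁻¹' {y} by
    ext; simp [SecureComputation.pair, Prod.ext_iff]]
  exact (hX x).inter (hY y)

lemma DiscreteRV.comp {𝒳 𝒴 : Type*} [Countable 𝒳] {X : Ω → 𝒳} (hX : DiscreteRV X)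
    (f : 𝒳 → 𝒴) : DiscreteRV (fun ω => f (X ω)) := by
  intro y
  rw [show (fun ω => f (X ω)) ⁻¹' {y} = ⋃ x ∈ f ⁻¹' {y}, X ⁻¹' {x} by ext; simp]
  exact .biUnion (Set.to_countable _) fun x _ => hX x

section Relabelling

variable {𝒳 𝒴 𝒵 𝒲 : Type*} {μ : Measure Ω}

lemma ent_comp_of_injective {e : 𝒳 → 𝒴} (he : Injective e) (X : Ω → 𝒳) :
    ent μ (fun ω => e (X ω)) = ent μ X := by
  have h_fiber (x : 𝒳) : (fun ω => e (X ω)) ⁻¹' {e x} = X ⁻¹' {x} := by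
    ext; simp [he.eq_iff]
  have h_empty (y : 𝒴) (hy : y ∉ Set.range e) : (fun ω => e (X ω)) ⁻¹' {y} = ∅ := by
    ext ω; simpa using fun h => hy ⟨X ω, h⟩
  unfold ent
  rw [← he.tsum_eq]
  · simp only [h_fiber]
  · intro y hy
    by_contra hy'
    simp [h_empty y hy'] at hy

lemma ent_congr_of_injective {X : Ω → 𝒳} {Y : Ω → 𝒴} (e : 𝒳 → 𝒴) (he : Injective e)
    (h : ∀ ω, e (X ω) = Y ω) : ent μ Y = ent μ X := by
  rw [← ent_comp_of_injective (μ := μ) he X]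
  simp only [h]

lemma cmi_comm (X : Ω → 𝒳) (Y : Ω → 𝒴) (Z : Ω → 𝒵) : cmi μ X Y Z = cmi μ Y X Z := by
  have h : ent μ (pair (pair Y X) Z) = ent μ (pair (pair X Y) Z) :=
    ent_congr_of_injective _ (Prod.swap_injective.prodMap injective_id) fun _ => rfl
  rw [cmi, cmi, h]; ring

lemma cmi_comp_left_of_injective {e : 𝒳 → 𝒲} (he : Injective e) (X : Ω → 𝒳) (Y : Ω → 𝒴)
    (Z : Ω → 𝒵) : cmi μ (fun ω => e (X ω)) Y Z = cmi μ X Y Z := by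
  have h₁ : ent μ (pair (fun ω => e (X ω)) Z) = ent μ (pair X Z) :=
    ent_congr_of_injective (Prod.map e id) (he.prodMap injective_id) fun _ => rfl
  have h₂ : ent μ (pair (pair (fun ω => e (X ω)) Y) Z) = ent μ (pair (pair X Y) Z) :=
    ent_congr_of_injective (Prod.map (Prod.map e id) id)
      ((he.prodMap injective_id).prodMap injective_id) fun _ => rfl
  rw [cmi, cmi, h₁, h₂]

lemma cmi_comp_cond_of_injective {e : 𝒵 → 𝒲} (he : Injective e) (X : Ω → 𝒳) (Y : Ω → 𝒴)
    (Z : Ω → 𝒵) : cmi μ X Y (fun ω => e (Z ω)) = cmi μ X Y Z := by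
  have h₁ : ent μ (pair X (fun ω => e (Z ω))) = ent μ (pair X Z) :=
    ent_congr_of_injective _ (injective_id.prodMap he) fun _ => rfl
  have h₂ : ent μ (pair Y (fun ω => e (Z ω))) = ent μ (pair Y Z) :=
    ent_congr_of_injective _ (injective_id.prodMap he) fun _ => rfl
  have h₃ : ent μ (pair (pair X Y) (fun ω => e (Z ω))) = ent μ (pair (pair X Y) Z) :=
    ent_congr_of_injective _ (injective_id.prodMap he) fun _ => rfl
  rw [cmi, cmi, h₁, h₂, h₃, ent_comp_of_injective he]

lemma cmi_pair_left (X : Ω → 𝒳) (W : Ω → 𝒲) (Y : Ω → 𝒴) (Z : Ω → 𝒵) :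
    cmi μ (pair X W) Y Z = cmi μ W Y Z + cmi μ X Y (pair W Z) := by
  have h₁ : ent μ (pair X (pair W Z)) = ent μ (pair (pair X W) Z) :=
    ent_congr_of_injective _ (Equiv.prodAssoc 𝒳 𝒲 𝒵).injective fun _ => rfl
  have h₂ : ent μ (pair Y (pair W Z)) = ent μ (pair (pair W Y) Z) :=
    ent_congr_of_injective (fun w => (w.1.2, w.1.1, w.2))
      (fun a b h => by simp_all [Prod.ext_iff]) fun _ => rfl
  have h₃ : ent μ (pair (pair X Y) (pair W Z)) = ent μ (pair (pair (pair X W) Y) Z) :=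
    ent_congr_of_injective (fun w => ((w.1.1.1, w.1.2), w.1.1.2, w.2))
      (fun a b h => by simp_all [Prod.ext_iff]) fun _ => rfl
  rw [cmi, cmi, cmi, h₁, h₂, h₃]; ring

end Relabelling

section Nonnegativity

variable {𝒳 𝒴 𝒵 𝒲 𝒱 : Type*} {μ : Measure Ω}

noncomputable def probMass (μ : Measure Ω) (X : Ω → 𝒳) (x : 𝒳) : ℝ := (μ (X ⁻¹' {x})).toReal

lemma probMass_nonneg (X : Ω → 𝒳) (x : 𝒳) : 0 ≤ probMass μ X x := ENNReal.toReal_nonneg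

lemma ent_eq_sum_negMulLog [Fintype 𝒳] (X : Ω → 𝒳) :
    ent μ X = ∑ x, negMulLog (probMass μ X x) :=
  tsum_fintype _

variable [IsFiniteMeasure μ]

lemma probMass_le_probMass_comp (X : Ω → 𝒳) (f : 𝒳 → 𝒴) (x : 𝒳) :
    probMass μ X x ≤ probMass μ (fun ω => f (X ω)) (f x) :=
  ENNReal.toReal_mono (measure_ne_top μ _) (measure_mono fun ω h => by simp_all)

lemma probMass_comp [Fintype 𝒲] [DecidableEq 𝒱] {W : Ω → 𝒲} (hW : DiscreteRV W) (f : 𝒲 → 𝒱)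
    (v : 𝒱) : probMass μ (fun ω => f (W ω)) v = ∑ w with f w = v, probMass μ W w := by
  have h_fiber : (fun ω => f (W ω)) ⁻¹' {v} = ⋃ w ∈ ({w | f w = v} : Finset 𝒲), W ⁻¹' {w} := by
    ext; simp
  rw [probMass, h_fiber, measure_biUnion_finset (Set.pairwiseDisjoint_fiber W _) fun w _ => hW w,
    ENNReal.toReal_sum fun w _ => measure_ne_top μ _]
  rfl

lemma sum_probMass_mul_comp [Fintype 𝒲] [Fintype 𝒱] {W : Ω → 𝒲} (hW : DiscreteRV W)
    (f : 𝒲 → 𝒱) (L : 𝒱 → ℝ) :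
    ∑ w, probMass μ W w * L (f w) = ∑ v, probMass μ (fun ω => f (W ω)) v * L v := by
  classical
  simp only [probMass_comp hW, Finset.sum_mul]
  rw [← Finset.sum_fiberwise Finset.univ f]
  refine Finset.sum_congr rfl fun v _ => Finset.sum_congr rfl fun w hw => ?_
  rw [(Finset.mem_filter.1 hw).2]

lemma sum_probMass_pair_left [Fintype 𝒳] [Fintype 𝒵] {X : Ω → 𝒳} {Z : Ω → 𝒵}
    (hX : DiscreteRV X) (hZ : DiscreteRV Z) (z : 𝒵) :
    ∑ x, probMass μ (pair X Z) (x, z) = probMass μ Z z := by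
  classical
  rw [show probMass μ Z z = probMass μ (fun ω => (pair X Z ω).2) z from rfl,
    probMass_comp (hX.pair hZ)]
  simp [Finset.sum_filter, Fintype.sum_prod_type]

lemma ent_comp_eq_neg_sum [Fintype 𝒲] [Fintype 𝒱] {W : Ω → 𝒲} (hW : DiscreteRV W)
    (f : 𝒲 → 𝒱) :
    ent μ (fun ω => f (W ω))
      = -∑ w, probMass μ W w * log (probMass μ (fun ω => f (W ω)) (f w)) := by
  rw [ent_eq_sum_negMulLog, sum_probMass_mul_comp hW f fun v => log (probMass μ _ v),
    ← Finset.sum_neg_distrib]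
  simp only [negMulLog, neg_mul]

lemma cmi_eq_sum [Fintype 𝒳] [Fintype 𝒴] [Fintype 𝒵] {X : Ω → 𝒳} {Y : Ω → 𝒴} {Z : Ω → 𝒵}
    (hX : DiscreteRV X) (hY : DiscreteRV Y) (hZ : DiscreteRV Z) :
    cmi μ X Y Z = ∑ w : (𝒳 × 𝒴) × 𝒵, probMass μ (pair (pair X Y) Z) w *
      (log (probMass μ (pair (pair X Y) Z) w) + log (probMass μ Z w.2)
        - log (probMass μ (pair X Z) (w.1.1, w.2)) - log (probMass μ (pair Y Z) (w.1.2, w.2))) := by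
  have hW : DiscreteRV (pair (pair X Y) Z) := (hX.pair hY).pair hZ
  have eXZ : ent μ (pair X Z) = -∑ w, probMass μ (pair (pair X Y) Z) w *
      log (probMass μ (pair X Z) (w.1.1, w.2)) := ent_comp_eq_neg_sum hW fun w => (w.1.1, w.2)
  have eYZ : ent μ (pair Y Z) = -∑ w, probMass μ (pair (pair X Y) Z) w *
      log (probMass μ (pair Y Z) (w.1.2, w.2)) := ent_comp_eq_neg_sum hW fun w => (w.1.2, w.2)
  have eXYZ : ent μ (pair (pair X Y) Z) = -∑ w, probMass μ (pair (pair X Y) Z) w *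
      log (probMass μ (pair (pair X Y) Z) w) := ent_comp_eq_neg_sum hW id
  have eZ : ent μ Z = -∑ w, probMass μ (pair (pair X Y) Z) w * log (probMass μ Z w.2) :=
    ent_comp_eq_neg_sum hW Prod.snd
  rw [cmi, eXZ, eYZ, eXYZ, eZ]
  simp only [mul_add, mul_sub, Finset.sum_add_distrib, Finset.sum_sub_distrib]
  ring

lemma sub_le_mul_log_div {p q : ℝ} (hp : 0 ≤ p) (hq : 0 < q) : p - q ≤ p * log (p / q) :=
  calc p - q = q * (p / q - 1) := by field_simp
    _ ≤ q * (p / q * log (p / q)) :=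
        mul_le_mul_of_nonneg_left (self_sub_one_le_mul_log (div_nonneg hp hq.le)) hq.le
    _ = p * log (p / q) := by field_simp

lemma sub_mul_div_le_mul_log {a b c d : ℝ} (ha : 0 ≤ a) (hab : a ≤ b) (hac : a ≤ c)
    (hbd : b ≤ d) : a - b * c / d ≤ a * (log a + log d - log b - log c) := by
  rcases ha.eq_or_lt with rfl | ha
  · simpa using div_nonneg (mul_nonneg hab hac) (hab.trans hbd)
  have hb : 0 < b := ha.trans_le hab
  have hc : 0 < c := ha.trans_le hac
  have hd : 0 < d := hb.trans_le hbd
  calc a - b * c / d ≤ a * log (a / (b * c / d)) := sub_le_mul_log_div ha.le (by positivity)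
    _ = a * (log a + log d - log b - log c) := by
        rw [log_div ha.ne' (by positivity), log_div (by positivity) hd.ne', log_mul hb.ne' hc.ne']
        ring

lemma sum_probMass_mul_probMass_div [Fintype 𝒳] [Fintype 𝒴] [Fintype 𝒵] {X : Ω → 𝒳}
    {Y : Ω → 𝒴} {Z : Ω → 𝒵} (hX : DiscreteRV X) (hY : DiscreteRV Y) (hZ : DiscreteRV Z) :
    ∑ w : (𝒳 × 𝒴) × 𝒵, probMass μ (pair X Z) (w.1.1, w.2) * probMass μ (pair Y Z) (w.1.2, w.2)
      / probMass μ Z w.2 = ∑ w, probMass μ (pair (pair X Y) Z) w := by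
  simp only [Fintype.sum_prod_type_right, ← Finset.sum_mul, ← Finset.mul_sum,
    ← Finset.sum_div, sum_probMass_pair_left hX hZ, sum_probMass_pair_left hY hZ,
    sum_probMass_pair_left (hX.pair hY) hZ, mul_self_div_self]

lemma cmi_nonneg [Fintype 𝒳] [Fintype 𝒴] [Fintype 𝒵] {X : Ω → 𝒳} {Y : Ω → 𝒴} {Z : Ω → 𝒵}
    (hX : DiscreteRV X) (hY : DiscreteRV Y) (hZ : DiscreteRV Z) : 0 ≤ cmi μ X Y Z := by
  set W := pair (pair X Y) Z
  -- Gibbs' inequality against `p(x,z) p(y,z) / p(z)`, which has the same total mass as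
  -- `p(x,y,z)`.
  calc (0 : ℝ) = ∑ w, probMass μ W w - ∑ w : (𝒳 × 𝒴) × 𝒵, probMass μ (pair X Z) (w.1.1, w.2)
        * probMass μ (pair Y Z) (w.1.2, w.2) / probMass μ Z w.2 := by
        rw [sum_probMass_mul_probMass_div hX hY hZ, sub_self]
    _ = ∑ w, (probMass μ W w - probMass μ (pair X Z) (w.1.1, w.2)
        * probMass μ (pair Y Z) (w.1.2, w.2) / probMass μ Z w.2) := by
        rw [Finset.sum_sub_distrib]
    _ ≤ _ := Finset.sum_le_sum fun w _ => sub_mul_div_le_mul_log (probMass_nonneg W w)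
        (probMass_le_probMass_comp W (fun w => (w.1.1, w.2)) w)
        (probMass_le_probMass_comp W (fun w => (w.1.2, w.2)) w)
        (probMass_le_probMass_comp (pair X Z) Prod.snd (w.1.1, w.2))
    _ = cmi μ X Y Z := (cmi_eq_sum hX hY hZ).symm

end Nonnegativity

section DataProcessing

variable {𝒳 𝒴 𝒵 𝒲 : Type*} [Fintype 𝒳] [Fintype 𝒴] [Fintype 𝒵] [Fintype 𝒲]
  {μ : Measure Ω} [IsFiniteMeasure μ] {X : Ω → 𝒳} {Y : Ω → 𝒴} {Z : Ω → 𝒵}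

lemma cmi_comp_left_le (hX : DiscreteRV X) (hY : DiscreteRV Y) (hZ : DiscreteRV Z)
    (f : 𝒳 → 𝒲) : cmi μ (fun ω => f (X ω)) Y Z ≤ cmi μ X Y Z := by
  have h_graph : cmi μ (pair X fun ω => f (X ω)) Y Z = cmi μ X Y Z :=
    cmi_comp_left_of_injective (e := fun x => (x, f x)) (fun _ _ h => congrArg Prod.fst h) X Y Z
  rw [← h_graph, cmi_pair_left]
  linarith [cmi_nonneg (μ := μ) hX hY ((hX.comp f).pair hZ)]

lemma cmi_comp_right_le (hX : DiscreteRV X) (hY : DiscreteRV Y) (hZ : DiscreteRV Z)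
    (f : 𝒴 → 𝒲) : cmi μ X (fun ω => f (Y ω)) Z ≤ cmi μ X Y Z := by
  rw [cmi_comm, cmi_comm X]
  exact cmi_comp_left_le hY hX hZ f

lemma cmi_cond_comp_le {S : Ω → 𝒲} (hZ : DiscreteRV Z) (hX : DiscreteRV X) (hS : DiscreteRV S)
    (g : 𝒲 → 𝒴) :
    cmi μ Z X (fun ω => g (S ω)) ≤ cmi μ S X (fun ω => g (S ω)) + cmi μ Z X S := by
  -- the chain rule for `I[(S,Z);X|g∘S]` in both orders; conditioning on `(S, g∘S)` is
  -- conditioning on `S`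
  have h_swap : cmi μ (pair S Z) X (fun ω => g (S ω)) = cmi μ (pair Z S) X fun ω => g (S ω) :=
    cmi_comp_left_of_injective Prod.swap_injective (pair Z S) X _
  have h_graph : cmi μ Z X (pair S fun ω => g (S ω)) = cmi μ Z X S :=
    cmi_comp_cond_of_injective (e := fun s => (s, g s)) (fun _ _ h => congrArg Prod.fst h) Z X S
  rw [cmi_pair_left, cmi_pair_left, h_graph] at h_swap
  linarith [cmi_nonneg (μ := μ) hS hX (hZ.pair (hS.comp g))]

end DataProcessing

theorem stmt10_general {Ω : Type*} [MeasurableSpace Ω] (μ : Measure Ω) [IsProbabilityMeasure μ]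
    {𝓡 𝓢 𝒳 𝒴 : Type} [Fintype 𝓡] [Fintype 𝓢] [Fintype 𝒳] [Fintype 𝒴]
    (R : Ω → 𝓡) (S : Ω → 𝓢) (hR : DiscreteRV R) (hS : DiscreteRV S)
    (htriv : IsTrivialPair μ R S) (φ : 𝓡 → 𝒳) (ψ : 𝓢 → 𝒴) (δ : ℝ)
    (hleak : cmi μ R (fun ω => ψ (S ω)) (fun ω => φ (R ω)) +
      cmi μ S (fun ω => φ (R ω)) (fun ω => ψ (S ω)) ≤ δ) :
    ∃ (𝒵 : Type) (_ : Fintype 𝒵) (Z : Ω → 𝒵), DiscreteRV Z ∧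
      cmi μ (fun ω => φ (R ω)) (fun ω => ψ (S ω)) Z = 0 ∧
      cmi μ Z (fun ω => φ (R ω)) (fun ω => ψ (S ω)) +
        cmi μ Z (fun ω => ψ (S ω)) (fun ω => φ (R ω)) ≤ δ := by
  obtain ⟨𝒵, _, Z, hZ, hRS, hZR, hZS⟩ := htriv
  refine ⟨𝒵, inferInstance, Z, hZ, le_antisymm ?_ (cmi_nonneg (hR.comp φ) (hS.comp ψ) hZ), ?_⟩
  · calc cmi μ (fun ω => φ (R ω)) (fun ω => ψ (S ω)) Z
        ≤ cmi μ R (fun ω => ψ (S ω)) Z := cmi_comp_left_le hR (hS.comp ψ) hZ φ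
      _ ≤ cmi μ R S Z := cmi_comp_right_le hR hS hZ ψ
      _ = 0 := hRS
  have hZX := cmi_cond_comp_le hZ (hR.comp φ) hS ψ (μ := μ)
  have hZY := cmi_cond_comp_le hZ (hS.comp ψ) hR φ (μ := μ)
  have hZRS : cmi μ Z (fun ω => φ (R ω)) S ≤ 0 := hZR ▸ cmi_comp_right_le hZ hR hS φ
  have hZSR : cmi μ Z (fun ω => ψ (S ω)) R ≤ 0 := hZS ▸ cmi_comp_right_le hZ hS hR ψ
  linarith

/-- If `(R,S)` is trivial and `I[R;ψ∘S|φ∘R] + I[S;φ∘R|ψ∘S] ≤ δ`, then there is a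
finite-valued `Z` with `I[φ∘R;ψ∘S|Z] = 0` and `I[Z;φ∘R|ψ∘S] + I[Z;ψ∘S|φ∘R] ≤ δ`. -/
theorem stmt10 {Ω : Type*} [MeasurableSpace Ω] (μ : Measure Ω) [IsProbabilityMeasure μ]
    {𝓡 𝓢 𝒳 𝒴 : Type} [Fintype 𝓡] [Fintype 𝓢] [Fintype 𝒳] [Fintype 𝒴]
    [Nonempty 𝓡] [Nonempty 𝓢] [Nonempty 𝒳] [Nonempty 𝒴]
    (R : Ω → 𝓡) (S : Ω → 𝓢) (hR : DiscreteRV R) (hS : DiscreteRV S)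
    (htriv : IsTrivialPair μ R S) (φ : 𝓡 → 𝒳) (ψ : 𝓢 → 𝒴) (δ : ℝ) (hδ : 0 ≤ δ)
    (hleak : cmi μ R (fun ω => ψ (S ω)) (fun ω => φ (R ω)) +
      cmi μ S (fun ω => φ (R ω)) (fun ω => ψ (S ω)) ≤ δ) :
    ∃ (𝒵 : Type) (_ : Fintype 𝒵) (Z : Ω → 𝒵), DiscreteRV Z ∧
      cmi μ (fun ω => φ (R ω)) (fun ω => ψ (S ω)) Z = 0 ∧
      cmi μ Z (fun ω => φ (R ω)) (fun ω => ψ (S ω)) +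
        cmi μ Z (fun ω => ψ (S ω)) (fun ω => φ (R ω)) ≤ δ :=
  stmt10_general μ R S hR hS htriv φ ψ δ hleak

end SecureComputation
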